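/- Let M, a, s be positive integers with M > 1 such that ∑_{i=0}^{M-1} (a+i)^2 = s^2, and suppose M = 12·m₁ + 11 for a nonnegative integer m₁. Then for every prime p > 3 with p ≡ 3 (mod 4), there do not exist integers i ≥ 0 and q ≥ 1 with p ∤ q such that m₁ + 1 = p^(2i+1)·q; equivalently, the exact power of p dividing M + 1 = 12·(m₁ + 1) is even. -/

import Mathlib

/-!
Completing the square in the sum of `M = 12 m + 11` consecutive squares gives
`s² = M (a + 6 m + 5)² + M (M - 1) (m + 1)`. Modulo a prime `p ≡ 3 (mod 4)` dividing `M + 1` this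
reads `s² ≡ -(a + 6 m + 5)²`, and since `-1` is not a square mod `p`, both `s` and `a + 6 m + 5` are
divisible by `p`. Dividing out `p²` lowers the exponent of `p` in the last term by two; once that
exponent is `1`, divisibility of `s` and `a + 6 m + 5` by `p` would put `p²` into a term that `p`
divides only once.
-/

open Finset

theorem six_mul_sum_range_add_sq {R : Type*} [CommRing R] (a : R) (n : ℕ) :
    6 * ∑ i ∈ range n, (a + i) ^ 2 =
      6 * n * a ^ 2 + 6 * a * n * (n - 1) + n * (n - 1) * (2 * n - 1) := by
  induction n with
  | zero => simp
  | succ n ih =>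
    rw [sum_range_succ, mul_add, ih]
    push_cast
    ring

theorem sum_range_twelve_mul_add_eleven_add_sq (a m : ℕ) :
    ∑ i ∈ range (12 * m + 11), (a + i) ^ 2 =
      (12 * m + 11) * (a + 6 * m + 5) ^ 2 + (12 * m + 11) * (12 * m + 10) * (m + 1) := by
  apply Nat.cast_injective (R := ℤ)
  apply mul_left_cancel₀ (by norm_num : (6 : ℤ) ≠ 0)
  push_cast
  rw [six_mul_sum_range_add_sq]
  push_cast
  ring

theorem Nat.Prime.dvd_of_dvd_sq_add_sq {p x y : ℕ} (hp : p.Prime) (hp3 : p % 4 = 3)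
    (h : p ∣ x ^ 2 + y ^ 2) : p ∣ y := by
  have := Fact.mk hp
  rw [← ZMod.natCast_eq_zero_iff] at h ⊢
  by_contra hy
  push_cast at h
  exact ZMod.mod_four_ne_three_of_sq_eq_neg_sq' hy (eq_neg_of_add_eq_zero_left h) hp3

theorem Nat.Prime.dvd_and_dvd_of_sq_eq {p c A e x y : ℕ} (hp : p.Prime) (hp3 : p % 4 = 3)
    (hc : p ∣ c + 1) (h : x ^ 2 = c * y ^ 2 + A * p ^ (e + 1)) : p ∣ x ∧ p ∣ y := by
  have hsum : p ∣ x ^ 2 + y ^ 2 := by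
    rw [h, show c * y ^ 2 + A * p ^ (e + 1) + y ^ 2 = (c + 1) * y ^ 2 + A * p ^ e * p by ring]
    exact dvd_add (dvd_mul_of_dvd_left hc _) (dvd_mul_left p _)
  exact ⟨hp.dvd_of_dvd_sq_add_sq hp3 (add_comm (x ^ 2) _ ▸ hsum),
    hp.dvd_of_dvd_sq_add_sq hp3 hsum⟩

theorem Nat.Prime.sq_ne_mul_sq_add_mul_pow_odd {p c A : ℕ} (hp : p.Prime) (hp3 : p % 4 = 3)
    (hc : p ∣ c + 1) (hA : ¬ p ∣ A) (i : ℕ) :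
    ∀ x y : ℕ, x ^ 2 ≠ c * y ^ 2 + A * p ^ (2 * i + 1) := by
  have hp0 : 0 < p := hp.pos
  induction i with
  | zero =>
    intro x y h
    obtain ⟨⟨x, rfl⟩, ⟨y, rfl⟩⟩ := hp.dvd_and_dvd_of_sq_eq hp3 hc h
    have h' : p * (p * x ^ 2) = p * (p * (c * y ^ 2) + A) := by linear_combination h
    refine hA ((Nat.dvd_add_right (dvd_mul_right p (c * y ^ 2))).mp ?_)
    rw [← Nat.eq_of_mul_eq_mul_left hp0 h']
    exact dvd_mul_right p _
  | succ i ih =>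
    intro x y h
    obtain ⟨⟨x, rfl⟩, ⟨y, rfl⟩⟩ := hp.dvd_and_dvd_of_sq_eq hp3 hc h
    refine ih x y (Nat.eq_of_mul_eq_mul_left (pow_pos hp0 2) ?_)
    linear_combination h

theorem stmt_general (M a s m₁ : ℕ)
    (hsum : ∑ i ∈ Finset.range M, (a + i) ^ 2 = s ^ 2)
    (hMeq : M = 12 * m₁ + 11) :
    ∀ p : ℕ, p.Prime → 3 < p → p % 4 = 3 →
      ¬ ∃ i q : ℕ, 1 ≤ q ∧ ¬ p ∣ q ∧ m₁ + 1 = p ^ (2 * i + 1) * q := by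
  rintro p hp - hp3 ⟨i, q, -, hpq, hm⟩
  subst hMeq
  rw [sum_range_twelve_mul_add_eleven_add_sq, hm] at hsum
  have hpM : p ∣ 12 * m₁ + 11 + 1 :=
    ⟨12 * p ^ (2 * i) * q, by rw [show 12 * m₁ + 11 + 1 = 12 * (m₁ + 1) by ring, hm]; ring⟩
  have hA : ¬ p ∣ (12 * m₁ + 11) * (12 * m₁ + 10) * q := by
    simp only [hp.dvd_mul, not_or]
    refine ⟨⟨fun h => ?_, fun h => ?_⟩, hpq⟩
    · exact hp.one_lt.ne' (Nat.eq_one_of_dvd_one ((Nat.dvd_add_right h).mp hpM))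
    · have h2 : p ∣ 2 := (Nat.dvd_add_right h).mp (by simpa [add_assoc] using hpM)
      have := Nat.le_of_dvd two_pos h2
      omega
  exact hp.sq_ne_mul_sq_add_mul_pow_odd hp3 hpM hA i s (a + 6 * m₁ + 5) (by rw [← hsum]; ring)

theorem stmt (M a s m₁ : ℕ) (hM : 1 < M) (ha : 1 ≤ a) (hs : 1 ≤ s)
    (hsum : ∑ i ∈ Finset.range M, (a + i) ^ 2 = s ^ 2)
    (hMeq : M = 12 * m₁ + 11) :
    ∀ p : ℕ, p.Prime → 3 < p → p % 4 = 3 →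
      ¬ ∃ i q : ℕ, 1 ≤ q ∧ ¬ p ∣ q ∧ m₁ + 1 = p ^ (2 * i + 1) * q :=
  stmt_general M a s m₁ hsum hMeq
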